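/- Let n ≥ 3 be an integer, k ≥ 3/2 a real number, and H a real number. Define the diagonal n×n matrix A with a_{11} = a_{nn} = ((2k + 2 − n)/(2nk − 3n + 6))·H, a_{ii} = ((2k − 1)/(2nk − 3n + 6))·H for 2 ≤ i ≤ n−1, and a_{ij} = 0 for i ≠ j. Then tr(A) = H and equality holds in the matrix inequality: k·|A|² − a_{11}a_{nn} − Σ_{i=1}^{n} a_{1i}² − Σ_{i=2}^{n} a_{in}² + H·(a_{11} + a_{nn}) = ((2k² + k − n + 2)/(2nk − 3n + 6))·H². -/

import Mathlib

open Finset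

theorem sum_ite_or_eq_of_ne {ι M : Type*} [Fintype ι] [DecidableEq ι] [AddCommMonoid M]
    {i₀ i₁ : ι} (h : i₀ ≠ i₁) (a b : M) :
    ∑ i, (if i = i₀ ∨ i = i₁ then a else b) = 2 • a + (Fintype.card ι - 2) • b := by
  have hpair : univ.filter (fun i => i = i₀ ∨ i = i₁) = {i₀, i₁} := by ext; simp
  rw [sum_ite, sum_const, sum_const, filter_not, hpair, card_sdiff_of_subset (subset_univ _),
    card_pair h, card_univ]

theorem sum_sq_diagonal_row {ι R : Type*} [Fintype ι] [DecidableEq ι] [Semiring R]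
    (d : ι → R) (i : ι) : ∑ j, Matrix.diagonal d i j ^ 2 = d i ^ 2 := by
  rw [Fintype.sum_eq_single i fun j hj => by simp [Matrix.diagonal_apply_ne _ hj.symm],
    Matrix.diagonal_apply_eq]

theorem sum_erase_sq_diagonal_col {ι R : Type*} [Fintype ι] [DecidableEq ι] [Semiring R]
    (d : ι → R) {i₀ j : ι} (hj : j ≠ i₀) :
    ∑ i ∈ univ.erase i₀, Matrix.diagonal d i j ^ 2 = d j ^ 2 := by
  rw [sum_eq_single_of_mem j (mem_erase.mpr ⟨hj, mem_univ j⟩)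
    fun i _ hi => by simp [Matrix.diagonal_apply_ne _ hi], Matrix.diagonal_apply_eq]

/-- the explicit diagonal matrix achieving equality in the matrix inequality. -/
theorem matrix_ineq_equality_case (n : ℕ) (hn : 3 ≤ n) (k : ℝ) (hk : 3 / 2 ≤ k) (H : ℝ)
    (A : Matrix (Fin n) (Fin n) ℝ)
    (hA : ∀ i j : Fin n, A i j =
      if i = j then
        (if i = (⟨0, by omega⟩ : Fin n) ∨ i = (⟨n - 1, by omega⟩ : Fin n) then
          ((2 * k + 2 - n) / (2 * n * k - 3 * n + 6)) * H
        else
          ((2 * k - 1) / (2 * n * k - 3 * n + 6)) * H)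
      else 0) :
    (∑ i, A i i) = H ∧
    k * (∑ i, ∑ j, (A i j) ^ 2)
      - A ⟨0, by omega⟩ ⟨0, by omega⟩ * A ⟨n - 1, by omega⟩ ⟨n - 1, by omega⟩
      - (∑ i, (A ⟨0, by omega⟩ i) ^ 2)
      - (∑ i ∈ Finset.univ.erase ⟨0, by omega⟩, (A i ⟨n - 1, by omega⟩) ^ 2)
      + H * (A ⟨0, by omega⟩ ⟨0, by omega⟩ + A ⟨n - 1, by omega⟩ ⟨n - 1, by omega⟩)
    = ((2 * k ^ 2 + k - n + 2) / (2 * n * k - 3 * n + 6)) * H ^ 2 := by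
  set first : Fin n := ⟨0, by omega⟩
  set last : Fin n := ⟨n - 1, by omega⟩
  have hne : first ≠ last := by simp [first, last, Fin.ext_iff]; omega
  set D : ℝ := 2 * n * k - 3 * n + 6 with hD_def
  have hD : D ≠ 0 := by
    have : (3 : ℝ) ≤ n := by exact_mod_cast hn
    nlinarith
  set a := (2 * k + 2 - n) / D * H with ha
  set b := (2 * k - 1) / D * H with hb
  set d : Fin n → ℝ := fun i => if i = first ∨ i = last then a else b
  obtain rfl : A = Matrix.diagonal d := by ext i j; simp [hA, Matrix.diagonal_apply, d]
  have hfirst : d first = a := if_pos (Or.inl rfl)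
  have hlast : d last = a := if_pos (Or.inr rfl)
  have hcard : ((Fintype.card (Fin n) - 2 : ℕ) : ℝ) = n - 2 := by
    rw [Fintype.card_fin, Nat.cast_sub (by omega)]; norm_num
  have htrace : ∑ i, d i = 2 * a + (n - 2) * b := by
    rw [sum_ite_or_eq_of_ne hne, nsmul_eq_mul, nsmul_eq_mul, hcard, Nat.cast_ofNat]
  have hfrobenius : ∑ i, d i ^ 2 = 2 * a ^ 2 + (n - 2) * b ^ 2 := by
    simp only [d, apply_ite (· ^ 2)]
    rw [sum_ite_or_eq_of_ne hne, nsmul_eq_mul, nsmul_eq_mul, hcard, Nat.cast_ofNat]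
  simp only [Matrix.diagonal_apply_eq, sum_sq_diagonal_row, sum_erase_sq_diagonal_col d hne.symm,
    hfirst, hlast, htrace, hfrobenius, ha, hb]
  constructor <;> · field_simp; rw [hD_def]; ring
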